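/- arXiv:1911.06791 — 4 statements merged into one kernel-verified Lean document; each statement's English description precedes it below -/
import Mathlib

section
/- Let f : 2^V → ℝ be submodular with f(∅) = 0 and curvature bound α. Let ∅ = σ_0 ⊂ σ_1 ⊂ … ⊂ σ_t be a chain with σ_i = σ_{i−1} ∪ {v_i} and v_i ∉ σ_{i−1} for each i ∈ [t], and write f_i = f(σ_i) − f(σ_{i−1}). Then for every T ⊆ V, setting J = {i ∈ [t] : v_i ∈ T}, it holds that f(σ_t ∪ T) ≥ f(T) + (1 − α)·f(σ_t) − (1 − α)·Σ_{i ∈ J} f_i. -/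
/-
STATEMENT 2 (Lemma 1): marginal value bound along a greedy chain for a
submodular function with curvature bound α.
-/

/-- A set function on a finite ground set is *submodular*. -/
def Submodular {V : Type*} [DecidableEq V] (f : Finset V → ℝ) : Prop :=
  ∀ S Ω : Finset V, f S + f Ω ≥ f (S ∪ Ω) + f (S ∩ Ω)

/-- `α` is a curvature bound for `f` (Definition 2). -/
def CurvatureBound {V : Type*} [DecidableEq V] (f : Finset V → ℝ) (α : ℝ) : Prop :=
  ∀ S Ω : Finset V, ∀ ω ∈ S \ Ω,
    f (insert ω ((S ∪ Ω).erase ω)) - f ((S ∪ Ω).erase ω) ≥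
      (1 - α) * (f (insert ω (S.erase ω)) - f (S.erase ω))

open Finset in
/-- **Lemma 1.** For a chain `∅ = σ_0 ⊂ σ_1 ⊂ … ⊂ σ_t` with
`σ_i = σ_{i−1} ∪ {v_i}`, `v_i ∉ σ_{i−1}`, marginal gains `f_i = f(σ_i) − f(σ_{i−1})`,
and any `T ⊆ V`, with `J = {i ∈ [t] : v_i ∈ T}`:
`f(σ_t ∪ T) ≥ f(T) + (1 − α)·f(σ_t) − (1 − α)·Σ_{i∈J} f_i`. -/
theorem chain_marginal_bound
    {V : Type*} [DecidableEq V] (f : Finset V → ℝ)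
    (hsub : Submodular f) (hempty : f ∅ = 0)
    (α : ℝ) (hcurv : CurvatureBound f α)
    (t : ℕ) (σ : ℕ → Finset V) (v : ℕ → V)
    (h0 : σ 0 = ∅)
    (hchain : ∀ i ∈ Finset.Icc 1 t, v i ∉ σ (i - 1) ∧ σ i = insert (v i) (σ (i - 1)))
    (T : Finset V) :
    f (σ t ∪ T) ≥ f T + (1 - α) * f (σ t) -
      (1 - α) * ∑ i ∈ (Finset.Icc 1 t).filter (fun i => v i ∈ T),
        (f (σ i) - f (σ (i - 1))) := by
  induction t with
  | zero => simp [h0, hempty]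
  | succ t ih =>
    have hch : ∀ i ∈ Finset.Icc 1 t, v i ∉ σ (i - 1) ∧ σ i = insert (v i) (σ (i - 1)) := by
      intro i hi
      rw [Finset.mem_Icc] at hi
      exact hchain i (Finset.mem_Icc.mpr ⟨hi.1, hi.2.trans (Nat.le_succ t)⟩)
    have ih' := ih hch
    obtain ⟨hv, hσ⟩ := hchain (t + 1)
      (Finset.mem_Icc.mpr ⟨Nat.succ_le_succ (Nat.zero_le t), le_refl _⟩)
    simp only [Nat.add_sub_cancel] at hv hσ
    have hIcc : Finset.Icc 1 (t + 1) = insert (t + 1) (Finset.Icc 1 t) := by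
      ext x; simp [Finset.mem_Icc]; omega
    by_cases hvT : v (t + 1) ∈ T
    · have hunion : σ (t + 1) ∪ T = σ t ∪ T := by
        rw [hσ, Finset.insert_union, Finset.insert_eq_of_mem (Finset.mem_union_right _ hvT)]
      have hnot : (t + 1) ∉ (Finset.Icc 1 t).filter (fun i => v i ∈ T) := by
        simp [Finset.mem_Icc]
      have hsum : (Finset.Icc 1 (t + 1)).filter (fun i => v i ∈ T) =
          insert (t + 1) ((Finset.Icc 1 t).filter (fun i => v i ∈ T)) := by
        rw [hIcc, Finset.filter_insert, if_pos hvT]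
      rw [hunion, hsum, Finset.sum_insert hnot]
      simp only [Nat.add_sub_cancel]
      linarith
    · have hfilter : (Finset.Icc 1 (t + 1)).filter (fun i => v i ∈ T) =
          (Finset.Icc 1 t).filter (fun i => v i ∈ T) := by
        rw [hIcc, Finset.filter_insert, if_neg hvT]
      have hvnot : v (t + 1) ∉ σ t ∪ T := by simp [hv, hvT]
      have hcB := hcurv (σ (t + 1)) (σ t ∪ T) (v (t + 1)) (by
        rw [Finset.mem_sdiff, hσ]
        exact ⟨Finset.mem_insert_self _ _, hvnot⟩)
      have h1 : σ (t + 1) ∪ (σ t ∪ T) = insert (v (t + 1)) (σ t ∪ T) := by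
        rw [hσ]; ext x; simp
      have h2 : (insert (v (t + 1)) (σ t ∪ T)).erase (v (t + 1)) = σ t ∪ T :=
        Finset.erase_insert hvnot
      have h3 : (σ (t + 1)).erase (v (t + 1)) = σ t := by
        rw [hσ]; exact Finset.erase_insert hv
      rw [h1, h2, h3, ← hσ] at hcB
      have hins : insert (v (t + 1)) (σ t ∪ T) = σ (t + 1) ∪ T := by
        rw [hσ]; ext x; simp
      rw [hins] at hcB
      rw [hfilter]
      linarith
end

section
/- Let f : 2^V → ℝ be submodular on a finite ground set V, let S, Ω ⊆ V, let c : V → ℝ be strictly positive, and let C ∈ ℝ satisfy Σ_{e ∈ Ω \ S} c(e) ≤ C. Suppose v ∈ V satisfies f_S(v) ≥ 0 and f_S(v)/c(v) ≥ f_S(e)/c(e) for every e ∈ Ω \ S. Then f(S ∪ Ω) − f(S) ≤ C · f_S(v)/c(v). -/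
/-- If `v` maximizes the marginal-gain-to-cost ratio `f_S(e)/c(e)` over `Ω \ S`,
has non-negative marginal gain, and `Σ_{e ∈ Ω \ S} c(e) ≤ C`, then
`f(S ∪ Ω) − f(S) ≤ C · f_S(v)/c(v)`. -/
theorem greedy_choice_bound
    {V : Type*} [DecidableEq V] [Fintype V] (f : Finset V → ℝ) (hsub : Submodular f)
    (S Ω : Finset V) (c : V → ℝ) (hc : ∀ e, 0 < c e)
    (C : ℝ) (hC : ∑ e ∈ Ω \ S, c e ≤ C)
    (v : V) (hv0 : 0 ≤ f (insert v S) - f S)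
    (hv : ∀ e ∈ Ω \ S,
      (f (insert e S) - f S) / c e ≤ (f (insert v S) - f S) / c v) :
    f (S ∪ Ω) - f S ≤ C * ((f (insert v S) - f S) / c v) := by
  set r : ℝ := (f (insert v S) - f S) / c v with hr
  have hr0 : 0 ≤ r := div_nonneg hv0 (hc v).le
  -- key submodularity bound
  have key : ∀ T : Finset V, f (S ∪ T) - f S ≤ ∑ e ∈ T \ S, (f (insert e S) - f S) := by
    intro T
    induction T using Finset.induction_on with
    | empty => simp
    | @insert a T' ha ih =>
      by_cases haS : a ∈ S ∪ T'
      · have h1 : S ∪ insert a T' = S ∪ T' := by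
          ext x; simp only [Finset.mem_union, Finset.mem_insert]
          constructor
          · rintro (h | rfl | h)
            · exact Or.inl h
            · simpa using haS
            · exact Or.inr h
          · rintro (h | h); exact Or.inl h; exact Or.inr (Or.inr h)
        have haS' : a ∈ S := by
          rcases Finset.mem_union.1 haS with h | h
          · exact h
          · exact absurd h ha
        have h2 : insert a T' \ S = T' \ S := by
          ext x; simp only [Finset.mem_sdiff, Finset.mem_insert]
          constructor
          · rintro ⟨rfl | h, hx⟩
            · exact absurd haS' hx
            · exact ⟨h, hx⟩
          · rintro ⟨h, hx⟩; exact ⟨Or.inr h, hx⟩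
        rw [h1, h2]; exact ih
      · have h1 : S ∪ insert a T' = insert a (S ∪ T') := Finset.union_insert _ _ _
        have haS' : a ∉ S := fun h => haS (Finset.mem_union_left _ h)
        have h2 : insert a T' \ S = insert a (T' \ S) := by
          rw [Finset.insert_sdiff_of_notMem _ haS']
        have hanotin : a ∉ T' \ S := fun h => ha (Finset.mem_sdiff.1 h).1
        have hsum : ∑ e ∈ insert a T' \ S, (f (insert e S) - f S)
            = (f (insert a S) - f S) + ∑ e ∈ T' \ S, (f (insert e S) - f S) := by
          rw [h2, Finset.sum_insert hanotin]
        have hsm := hsub (insert a S) (S ∪ T')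
        have hu : insert a S ∪ (S ∪ T') = insert a (S ∪ T') := by
          rw [Finset.insert_union, ← Finset.union_assoc, Finset.union_self]
        have hi : insert a S ∩ (S ∪ T') = S := by
          ext x
          simp only [Finset.mem_inter, Finset.mem_insert, Finset.mem_union]
          constructor
          · rintro ⟨rfl | h, h2'⟩
            · rcases h2' with h | h
              · exact h
              · exact absurd h ha
            · exact h
          · intro h; exact ⟨Or.inr h, Or.inl h⟩
        rw [hu, hi] at hsm
        rw [h1, hsum]
        linarith
  have step2 : ∑ e ∈ Ω \ S, (f (insert e S) - f S) ≤ ∑ e ∈ Ω \ S, c e * r := by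
    apply Finset.sum_le_sum
    intro e he
    have := hv e he
    have hce := hc e
    calc f (insert e S) - f S = c e * ((f (insert e S) - f S) / c e) := by
          field_simp
      _ ≤ c e * r := by
          apply mul_le_mul_of_nonneg_left this hce.le
  calc f (S ∪ Ω) - f S ≤ ∑ e ∈ Ω \ S, (f (insert e S) - f S) := key Ω
    _ ≤ ∑ e ∈ Ω \ S, c e * r := step2
    _ = (∑ e ∈ Ω \ S, c e) * r := by rw [Finset.sum_mul]
    _ ≤ C * r := mul_le_mul_of_nonneg_right hC hr0
end

section
/- Let a > 0, λ > 0, W > 0, r ∈ ℕ, and let c_1, …, c_r be real numbers with 0 < c_t ≤ λW for every t ∈ [r]. Suppose x_1, …, x_r ≥ 0 satisfy (aλW / c_t)·x_t + a·Σ_{i=1}^{t−1} x_i ≥ 1 for every t ∈ [r]. Then Σ_{t=1}^{r} x_t ≥ (1/a)·(1 − Π_{t=1}^{r} (1 − c_t/(λW))). -/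
/-
STATEMENT 9: lower bound (6) for any non-negative solution of the greedy
linear program.  Indices run over [r] = {1, …, r}; empty sums are 0 and
empty products are 1.
-/

theorem greedy_lp_lower_bound
    (a lam W : ℝ) (ha : 0 < a) (hlam : 0 < lam) (hW : 0 < W)
    (r : ℕ) (c x : ℕ → ℝ)
    (hc : ∀ t ∈ Finset.Icc 1 r, 0 < c t ∧ c t ≤ lam * W)
    (hx0 : ∀ t ∈ Finset.Icc 1 r, 0 ≤ x t)
    (hx : ∀ t ∈ Finset.Icc 1 r,
      (a * lam * W / c t) * x t + a * ∑ i ∈ Finset.Ico 1 t, x i ≥ 1) :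
    ∑ t ∈ Finset.Icc 1 r, x t ≥
      (1 / a) * (1 - ∏ t ∈ Finset.Icc 1 r, (1 - c t / (lam * W))) := by
  have hlw : (0:ℝ) < lam * W := mul_pos hlam hW
  have key : ∀ n, n ≤ r →
      1 - a * ∑ t ∈ Finset.Icc 1 n, x t ≤
        ∏ t ∈ Finset.Icc 1 n, (1 - c t / (lam * W)) := by
    intro n
    induction n with
    | zero => simp
    | succ m ih =>
      intro hm
      have ih' := ih (Nat.le_of_succ_le hm)
      have h1m : 1 ≤ m + 1 := Nat.succ_le_succ (Nat.zero_le m)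
      rw [Finset.sum_Icc_succ_top h1m, Finset.prod_Icc_succ_top h1m]
      have hmem : m + 1 ∈ Finset.Icc 1 r := by
        simp only [Finset.mem_Icc]; omega
      obtain ⟨hc1, hc2⟩ := hc _ hmem
      have hx' := hx _ hmem
      rw [Finset.Ico_add_one_right_eq_Icc] at hx'
      set S := ∑ t ∈ Finset.Icc 1 m, x t with hS
      set P := ∏ t ∈ Finset.Icc 1 m, (1 - c t / (lam * W)) with hP
      have hd1 : c (m + 1) / (lam * W) ≤ 1 := by
        rw [div_le_one hlw]; exact hc2
      have hd0 : 0 < c (m + 1) / (lam * W) := div_pos hc1 hlw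
      have h3 : c (m + 1) / (lam * W) * (1 - a * S) ≤ a * x (m + 1) := by
        have h := mul_le_mul_of_nonneg_left
          (show 1 - a * S ≤ (a * lam * W / c (m + 1)) * x (m + 1) by linarith)
          (le_of_lt hd0)
        have heq : c (m + 1) / (lam * W) * ((a * lam * W / c (m + 1)) * x (m + 1))
            = a * x (m + 1) := by
          field_simp
        linarith [heq ▸ h]
      nlinarith [mul_le_mul_of_nonneg_right ih'
        (show (0:ℝ) ≤ 1 - c (m + 1) / (lam * W) by linarith)]
  have hkey := key r le_rfl
  rw [ge_iff_le, div_mul_eq_mul_div, div_le_iff₀ ha]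
  linarith
end

section
/- Let a > 0, λ > 0, W > 0, r ∈ ℕ, and let c_1, …, c_r be real numbers with 0 < c_t ≤ λW for every t ∈ [r] and Σ_{t=1}^{r} c_t > W. Suppose x_1, …, x_r ≥ 0 satisfy (aλW / c_t)·x_t + a·Σ_{i=1}^{t−1} x_i ≥ 1 for every t ∈ [r]. Then Σ_{t=1}^{r} x_t ≥ (1/a)·(1 − e^{−1/λ}). -/
/-!
Set `q t = c t / (λ W) ∈ (0, 1]` and `y t = a x t`. Multiplying the `t`-th constraint by `q t`
gives `y t ≥ q t (1 - Y_{t-1})` for the partial sums `Y`, i.e. `1 - Y_t ≤ (1 - q t)(1 - Y_{t-1})`,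
so `1 - Y_r ≤ ∏ (1 - q t) ≤ exp (-∑ q t) < exp (-1/λ)`.
-/

open Finset Real

theorem prod_one_sub_le_exp_neg_sum {ι : Type*} {s : Finset ι} {q : ι → ℝ}
    (hq : ∀ i ∈ s, q i ≤ 1) : ∏ i ∈ s, (1 - q i) ≤ exp (-∑ i ∈ s, q i) := by
  rw [← sum_neg_distrib, exp_sum]
  exact prod_le_prod (fun i hi ↦ sub_nonneg.2 (hq i hi)) fun i _ ↦ one_sub_le_exp_neg (q i)

theorem one_sub_prod_one_sub_le_sum_of_greedy {q y : ℕ → ℝ} {n : ℕ}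
    (hq : ∀ t ∈ Icc 1 n, q t ≤ 1)
    (hy : ∀ t ∈ Icc 1 n, q t * (1 - ∑ i ∈ Ico 1 t, y i) ≤ y t) :
    1 - ∏ t ∈ Icc 1 n, (1 - q t) ≤ ∑ t ∈ Icc 1 n, y t := by
  induction n with
  | zero => simp
  | succ m ih =>
    have hsub : Icc 1 m ⊆ Icc 1 (m + 1) := Icc_subset_Icc_right m.le_succ
    have hlast : m + 1 ∈ Icc 1 (m + 1) := by simp
    have ih := ih (fun t ht ↦ hq t (hsub ht)) fun t ht ↦ hy t (hsub ht)
    have hstep := hy (m + 1) hlast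
    rw [Ico_add_one_right_eq_Icc] at hstep
    rw [prod_Icc_succ_top (by omega), sum_Icc_succ_top (by omega)]
    nlinarith [mul_le_mul_of_nonneg_left ih (sub_nonneg.2 (hq (m + 1) hlast))]

theorem greedy_lp_exp_lower_bound_general
    (a lam W : ℝ) (ha : 0 < a) (hlam : 0 < lam) (hW : 0 < W)
    (r : ℕ) (c x : ℕ → ℝ)
    (hc : ∀ t ∈ Finset.Icc 1 r, 0 < c t ∧ c t ≤ lam * W)
    (hcW : ∑ t ∈ Finset.Icc 1 r, c t > W)
    (hx : ∀ t ∈ Finset.Icc 1 r,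
      (a * lam * W / c t) * x t + a * ∑ i ∈ Finset.Ico 1 t, x i ≥ 1) :
    ∑ t ∈ Finset.Icc 1 r, x t ≥ (1 / a) * (1 - Real.exp (-1 / lam)) := by
  have hlW : 0 < lam * W := mul_pos hlam hW
  have hq : ∀ t ∈ Icc 1 r, c t / (lam * W) ≤ 1 := fun t ht ↦ (div_le_one hlW).2 (hc t ht).2
  have hy : ∀ t ∈ Icc 1 r,
      c t / (lam * W) * (1 - ∑ i ∈ Ico 1 t, a * x i) ≤ a * x t := by
    intro t ht
    have hct := (hc t ht).1
    have h := hx t ht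
    rw [← mul_sum]
    rw [ge_iff_le, ← sub_le_iff_le_add, div_mul_eq_mul_div, le_div_iff₀ hct] at h
    rw [div_mul_eq_mul_div, div_le_iff₀ hlW]
    linarith
  have hgreedy := one_sub_prod_one_sub_le_sum_of_greedy hq hy
  have hexp : -∑ t ∈ Icc 1 r, c t / (lam * W) ≤ -1 / lam := by
    rw [← sum_div, neg_div, neg_le_neg_iff, div_le_div_iff₀ hlam hlW]
    nlinarith
  have hprod := (prod_one_sub_le_exp_neg_sum hq).trans (exp_le_exp.2 hexp)
  rw [← mul_sum] at hgreedy
  rw [ge_iff_le, one_div_mul_eq_div, div_le_iff₀ ha, mul_comm]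
  linarith

theorem greedy_lp_exp_lower_bound
    (a lam W : ℝ) (ha : 0 < a) (hlam : 0 < lam) (hW : 0 < W)
    (r : ℕ) (c x : ℕ → ℝ)
    (hc : ∀ t ∈ Finset.Icc 1 r, 0 < c t ∧ c t ≤ lam * W)
    (hcW : ∑ t ∈ Finset.Icc 1 r, c t > W)
    (hx0 : ∀ t ∈ Finset.Icc 1 r, 0 ≤ x t)
    (hx : ∀ t ∈ Finset.Icc 1 r,
      (a * lam * W / c t) * x t + a * ∑ i ∈ Finset.Ico 1 t, x i ≥ 1) :
    ∑ t ∈ Finset.Icc 1 r, x t ≥ (1 / a) * (1 - Real.exp (-1 / lam)) :=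
  greedy_lp_exp_lower_bound_general a lam W ha hlam hW r c x hc hcW hx
end
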